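/- arXiv:1708.01896 — 3 statements merged into one kernel-verified Lean document; each statement's English description precedes it below -/
import Mathlib

section
/- If X and Y are quasi-isometric geodesic metric spaces and X is δ-hyperbolic for some δ, then Y is δ'-hyperbolic for some δ' (depending only on δ and the quasi-isometry constants). -/
/-! Sampling the sides of a geodesic triangle of `Y` at integer times and pulling them back by a
coarse inverse of `f` gives quasi-geodesic coarse paths in `X`. By the Morse lemma in the
δ-hyperbolic space `X`, each of them is uniformly Hausdorff-close to the geodesic joining its ends,
so the triangle of `Y` is uniformly close, via `f`, to a geodesic triangle of `X`, which is
δ-thin. -/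

/-- `f` is a (K,C)-quasi-isometric embedding. -/
def QIEmb {X Y : Type*} [MetricSpace X] [MetricSpace Y] (K C : ℝ) (f : X → Y) : Prop :=
  ∀ x z : X, (1/K) * dist x z - C ≤ dist (f x) (f z) ∧ dist (f x) (f z) ≤ K * dist x z + C

/-- `f` is a (K,C)-quasi-isometry: a quasi-isometric embedding with C-dense image. -/
def QI {X Y : Type*} [MetricSpace X] [MetricSpace Y] (K C : ℝ) (f : X → Y) : Prop :=
  QIEmb K C f ∧ ∀ y : Y, ∃ x : X, dist y (f x) ≤ C

/-- `γ` restricted to the parameter set `s` is an isometric (geodesic) parametrization. -/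
def IsGeodesicOn {X : Type*} [MetricSpace X] (γ : ℝ → X) (s : Set ℝ) : Prop :=
  ∀ a ∈ s, ∀ b ∈ s, dist (γ a) (γ b) = |a - b|

/-- `γ` is a geodesic from `x` to `y`, parametrized by `[0, dist x y]`. -/
def GeodesicFrom {X : Type*} [MetricSpace X] (γ : ℝ → X) (x y : X) : Prop :=
  IsGeodesicOn γ (Set.Icc 0 (dist x y)) ∧ γ 0 = x ∧ γ (dist x y) = y

/-- A geodesic metric space: any two points are joined by a geodesic. -/
def GeodesicSpace (X : Type*) [MetricSpace X] : Prop :=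
  ∀ x y : X, ∃ γ : ℝ → X, GeodesicFrom γ x y

/-- A geodesic triangle: three vertices together with geodesic sides joining them. -/
structure GeoTriangle (X : Type*) [MetricSpace X] where
  a : X
  b : X
  c : X
  s1 : ℝ → X
  s2 : ℝ → X
  s3 : ℝ → X
  h1 : GeodesicFrom s1 a b
  h2 : GeodesicFrom s2 b c
  h3 : GeodesicFrom s3 c a

/-- The i-th side of a geodesic triangle, as a subset of `X`. -/
def GeoTriangle.side {X : Type*} [MetricSpace X] (T : GeoTriangle X) : Fin 3 → Set X
  | 0 => T.s1 '' Set.Icc 0 (dist T.a T.b)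
  | 1 => T.s2 '' Set.Icc 0 (dist T.b T.c)
  | 2 => T.s3 '' Set.Icc 0 (dist T.c T.a)

/-- A triangle is δ-thin if each side lies in the closed δ-neighborhood of the
union of the other two sides. -/
def IsThin {X : Type*} [MetricSpace X] (δ : ℝ) (T : GeoTriangle X) : Prop :=
  ∀ i : Fin 3, ∀ p ∈ T.side i, ∃ q ∈ T.side (i + 1) ∪ T.side (i + 2), dist p q ≤ δ

/-- `X` is δ-hyperbolic: every geodesic triangle is δ-thin. -/
def Hyperbolic (X : Type*) [MetricSpace X] (δ : ℝ) : Prop :=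
  ∀ T : GeoTriangle X, IsThin δ T

open Set Metric

variable {X : Type*} [MetricSpace X]

lemma min_natCast_mem_Icc {L : ℝ} (hL : 0 ≤ L) (i : ℕ) : min (i : ℝ) L ∈ Icc 0 L :=
  ⟨le_min i.cast_nonneg hL, min_le_right _ _⟩

def sample {α : Type*} (γ : ℝ → α) (L : ℝ) (i : ℕ) : α := γ (min (i : ℝ) L)

lemma sample_mem_image {α : Type*} {γ : ℝ → α} {L : ℝ} (hL : 0 ≤ L) (i : ℕ) :
    sample γ L i ∈ γ '' Icc 0 L :=
  ⟨_, min_natCast_mem_Icc hL i, rfl⟩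

namespace GeodesicFrom

variable {γ : ℝ → X} {x y : X}

lemma dist_left (h : GeodesicFrom γ x y) {s : ℝ} (hs : s ∈ Icc 0 (dist x y)) :
    dist x (γ s) = s := by
  rw [← h.2.1, h.1 0 ⟨le_rfl, dist_nonneg⟩ s hs, zero_sub, abs_neg, abs_of_nonneg hs.1]

lemma dist_right (h : GeodesicFrom γ x y) {s : ℝ} (hs : s ∈ Icc 0 (dist x y)) :
    dist (γ s) y = dist x y - s := by
  rw [← h.2.2, h.1 s hs _ ⟨dist_nonneg, le_rfl⟩, h.2.2, abs_of_nonpos (by linarith [hs.2])]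
  ring

lemma symm (h : GeodesicFrom γ x y) : GeodesicFrom (fun t => γ (dist x y - t)) y x := by
  refine ⟨fun a ha b hb => ?_, by simpa using h.2.2, by simpa [dist_comm y x] using h.2.1⟩
  rw [dist_comm y x] at ha hb
  rw [h.1 _ ⟨by linarith [ha.2], by linarith [ha.1]⟩ _ ⟨by linarith [hb.2], by linarith [hb.1]⟩,
    abs_sub_comm]
  ring_nf

lemma restrict (h : GeodesicFrom γ x y) {a b : ℝ} (ha : 0 ≤ a) (hab : a ≤ b)
    (hb : b ≤ dist x y) : GeodesicFrom (fun t => γ (a + t)) (γ a) (γ b) := by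
  have hlen : dist (γ a) (γ b) = b - a := by
    rw [h.1 a ⟨ha, hab.trans hb⟩ b ⟨ha.trans hab, hb⟩, abs_sub_comm, abs_of_nonneg (by linarith)]
  refine ⟨fun s hs t ht => ?_, by simp, by rw [hlen]; ring_nf⟩
  rw [hlen] at hs ht
  rw [h.1 _ ⟨by linarith [hs.1], by linarith [hs.2]⟩ _ ⟨by linarith [ht.1], by linarith [ht.2]⟩]
  ring_nf

lemma continuousOn (h : GeodesicFrom γ x y) : ContinuousOn γ (Icc 0 (dist x y)) :=
  (LipschitzOnWith.of_dist_le_mul (K := 1) fun s hs t ht => by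
    rw [h.1 s hs t ht, Real.dist_eq]; simp).continuousOn

lemma sample_zero (h : GeodesicFrom γ x y) : sample γ (dist x y) 0 = x := by
  simp [sample, h.2.1]

lemma sample_ceil (h : GeodesicFrom γ x y) : sample γ (dist x y) ⌈dist x y⌉₊ = y := by
  rw [sample, min_eq_right (Nat.le_ceil _), h.2.2]

lemma dist_sample (h : GeodesicFrom γ x y) (i j : ℕ) :
    dist (sample γ (dist x y) i) (sample γ (dist x y) j) =
      |min (i : ℝ) (dist x y) - min (j : ℝ) (dist x y)| :=
  h.1 _ (min_natCast_mem_Icc dist_nonneg i) _ (min_natCast_mem_Icc dist_nonneg j)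

lemma dist_sample_le (h : GeodesicFrom γ x y) (i j : ℕ) :
    dist (sample γ (dist x y) i) (sample γ (dist x y) j) ≤ |(i : ℝ) - j| := by
  rw [h.dist_sample]
  simpa using abs_min_sub_min_le_max (i : ℝ) (dist x y) j (dist x y)

lemma abs_sub_le_dist_sample (h : GeodesicFrom γ x y) {i j : ℕ} (hi : i ≤ ⌈dist x y⌉₊)
    (hj : j ≤ ⌈dist x y⌉₊) :
    |(i : ℝ) - j| ≤ dist (sample γ (dist x y) i) (sample γ (dist x y) j) + 1 := by
  have hceil := Nat.ceil_lt_add_one (dist_nonneg (x := x) (y := y))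
  have hi' : (i : ℝ) ≤ ⌈dist x y⌉₊ := by exact_mod_cast hi
  have hj' : (j : ℝ) ≤ ⌈dist x y⌉₊ := by exact_mod_cast hj
  have hmi : (i : ℝ) - 1 ≤ min (i : ℝ) (dist x y) := le_min (by linarith) (by linarith)
  have hmj : (j : ℝ) - 1 ≤ min (j : ℝ) (dist x y) := le_min (by linarith) (by linarith)
  rw [h.dist_sample, abs_le]
  constructor <;>
    linarith [le_abs_self (min (i : ℝ) (dist x y) - min (j : ℝ) (dist x y)),
      neg_abs_le (min (i : ℝ) (dist x y) - min (j : ℝ) (dist x y)),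
      min_le_left (i : ℝ) (dist x y), min_le_left (j : ℝ) (dist x y)]

lemma exists_dist_sample_le_one (h : GeodesicFrom γ x y) {t : ℝ} (ht : t ∈ Icc 0 (dist x y)) :
    ∃ i ≤ ⌈dist x y⌉₊, dist (γ t) (sample γ (dist x y) i) ≤ 1 := by
  refine ⟨⌊t⌋₊, (Nat.floor_le_floor ht.2).trans (Nat.floor_le_ceil _), ?_⟩
  have hfl : (⌊t⌋₊ : ℝ) ≤ t := Nat.floor_le ht.1
  rw [sample, min_eq_left (hfl.trans ht.2),
    h.1 t ht _ ⟨Nat.cast_nonneg _, hfl.trans ht.2⟩, abs_of_nonneg (by linarith)]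
  linarith [Nat.lt_floor_add_one t]

lemma dist_sample_le_dist (h : GeodesicFrom γ x y) (i : ℕ) :
    dist x (sample γ (dist x y) i) ≤ dist x y ∧ dist (sample γ (dist x y) i) y ≤ dist x y := by
  have hm := min_natCast_mem_Icc (dist_nonneg (x := x) (y := y)) i
  rw [sample, h.dist_left hm, h.dist_right hm]
  exact ⟨hm.2, by linarith [hm.1]⟩

end GeodesicFrom

def IsCoarsePath (G : ℝ) (N : ℕ) (c : ℕ → X) : Prop :=
  ∀ i < N, dist (c i) (c (i + 1)) ≤ G

namespace IsCoarsePath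

variable {G : ℝ} {N : ℕ} {c : ℕ → X}

lemma of_geodesicFrom {γ : ℝ → X} {x y : X} (h : GeodesicFrom γ x y) :
    IsCoarsePath 1 ⌈dist x y⌉₊ (sample γ (dist x y)) := fun i _ =>
  (h.dist_sample_le i (i + 1)).trans_eq (by push_cast; simp)

lemma mono {G' : ℝ} {M : ℕ} (h : IsCoarsePath G N c) (hG : G ≤ G') (hM : M ≤ N) :
    IsCoarsePath G' M c :=
  fun i hi => (h i (by omega)).trans hG

lemma shift (h : IsCoarsePath G N c) (M : ℕ) : IsCoarsePath G (N - M) (fun i => c (M + i)) :=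
  fun i hi => h (M + i) (by omega)

lemma dist_le (h : IsCoarsePath G N c) {i j : ℕ} (hij : i ≤ j) (hj : j ≤ N) :
    dist (c i) (c j) ≤ G * (j - i) := by
  induction j, hij using Nat.le_induction with
  | base => simp
  | succ j hij ih =>
    calc dist (c i) (c (j + 1)) ≤ dist (c i) (c j) + dist (c j) (c (j + 1)) := dist_triangle _ _ _
      _ ≤ G * (j - i) + G := add_le_add (ih (by omega)) (h j (by omega))
      _ = G * ((j + 1 : ℕ) - i) := by push_cast; ring

lemma exists_segment (h : IsCoarsePath G N c) {i j : ℕ} (hi : i ≤ N) (hj : j ≤ N) :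
    ∃ (n : ℕ) (e : ℕ → X), (n : ℝ) = |(i : ℝ) - j| ∧ IsCoarsePath G n e ∧ e 0 = c i ∧ e n = c j ∧
      ∀ t ≤ n, ∃ l ≤ N, e t = c l := by
  rcases le_total i j with hij | hji
  · refine ⟨j - i, fun t => c (i + t), ?_, fun t ht => h (i + t) (by omega), by simp,
      by simp [Nat.add_sub_cancel' hij], fun t ht => ⟨i + t, by omega, rfl⟩⟩
    rw [Nat.cast_sub hij, abs_sub_comm, abs_of_nonneg (by simp [hij])]
  · refine ⟨i - j, fun t => c (i - t), ?_, fun t ht => ?_, by simp,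
      by simp [Nat.sub_sub_self hji], fun t ht => ⟨i - t, by omega, rfl⟩⟩
    · rw [Nat.cast_sub hji, abs_of_nonneg (by simp [hji])]
    · simp only
      rw [dist_comm, show i - t = (i - (t + 1)) + 1 by omega]
      exact h _ (by omega)

end IsCoarsePath

def appendPath {α : Type*} (c₁ : ℕ → α) (N₁ : ℕ) (c₂ : ℕ → α) (i : ℕ) : α :=
  if i ≤ N₁ then c₁ i else c₂ (i - N₁)

section appendPath

variable {G : ℝ} {N₁ N₂ : ℕ} {c₁ c₂ : ℕ → X}

omit [MetricSpace X] in
lemma appendPath_zero : appendPath c₁ N₁ c₂ 0 = c₁ 0 := by simp [appendPath]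

omit [MetricSpace X] in
lemma appendPath_add (h : c₁ N₁ = c₂ 0) (i : ℕ) : appendPath c₁ N₁ c₂ (N₁ + i) = c₂ i := by
  unfold appendPath
  split_ifs with hi
  · obtain rfl : i = 0 := by omega
    simpa using h
  · simp

lemma IsCoarsePath.append (h₁ : IsCoarsePath G N₁ c₁) (h₂ : IsCoarsePath G N₂ c₂)
    (h : c₁ N₁ = c₂ 0) : IsCoarsePath G (N₁ + N₂) (appendPath c₁ N₁ c₂) := by
  intro i hi
  rcases lt_or_ge i N₁ with hi₁ | hi₁
  · simpa [appendPath, hi₁.le, Nat.succ_le_of_lt hi₁] using h₁ i hi₁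
  · obtain ⟨k, rfl⟩ := Nat.exists_eq_add_of_le hi₁
    rw [appendPath_add h, add_assoc, appendPath_add h]
    exact h₂ k (by omega)

omit [MetricSpace X] in
lemma forall_appendPath (P : X → Prop) (h₁ : ∀ i ≤ N₁, P (c₁ i)) (h₂ : ∀ i ≤ N₂, P (c₂ i)) :
    ∀ i ≤ N₁ + N₂, P (appendPath c₁ N₁ c₂ i) := by
  intro i hi
  unfold appendPath
  split_ifs with hi₁
  · exact h₁ i hi₁
  · exact h₂ _ (by omega)

end appendPath

lemma hyperbolic_iff {δ : ℝ} : Hyperbolic X δ ↔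
    ∀ (a b c : X) (γ₁ γ₂ γ₃ : ℝ → X), GeodesicFrom γ₁ a b → GeodesicFrom γ₂ b c →
      GeodesicFrom γ₃ c a → ∀ p ∈ γ₁ '' Icc 0 (dist a b),
        ∃ q ∈ γ₂ '' Icc 0 (dist b c) ∪ γ₃ '' Icc 0 (dist c a), dist p q ≤ δ := by
  refine ⟨fun h a b c γ₁ γ₂ γ₃ h₁ h₂ h₃ => h ⟨a, b, c, γ₁, γ₂, γ₃, h₁, h₂, h₃⟩ 0, ?_⟩
  intro h T i
  fin_cases i
  · exact h _ _ _ _ _ _ T.h1 T.h2 T.h3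
  · exact h _ _ _ _ _ _ T.h2 T.h3 T.h1
  · exact h _ _ _ _ _ _ T.h3 T.h1 T.h2

lemma Hyperbolic.mono {δ δ' : ℝ} (h : Hyperbolic X δ) (hδ : δ ≤ δ') : Hyperbolic X δ' :=
  fun T i p hp => (h T i p hp).imp fun _ ⟨hq, hpq⟩ => ⟨hq, hpq.trans hδ⟩

lemma hyperbolic_of_forall_dist_le {Δ : ℝ} (h : ∀ p q : X, dist p q ≤ Δ) : Hyperbolic X Δ :=
  hyperbolic_iff.2 fun _ _ _ _ γ₂ _ _ _ _ _ _ =>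
    ⟨γ₂ 0, Or.inl ⟨0, ⟨le_rfl, dist_nonneg⟩, rfl⟩, h _ _⟩

/-- Split the path in halves, use thinness of the triangle formed by the geodesic and two geodesics
through the midpoint, and recurse. -/
theorem Hyperbolic.exists_dist_le_of_isCoarsePath {δ G : ℝ} (hX : GeodesicSpace X)
    (h : Hyperbolic X δ) (hG : 0 ≤ G) (k : ℕ) {N : ℕ} {c : ℕ → X} {σ : ℝ → X} (hN : N ≤ 2 ^ k)
    (hc : IsCoarsePath G N c) (hσ : GeodesicFrom σ (c 0) (c N)) {s : ℝ}
    (hs : s ∈ Icc 0 (dist (c 0) (c N))) : ∃ i ≤ N, dist (σ s) (c i) ≤ k * δ + G := by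
  induction k generalizing N c σ s with
  | zero =>
    refine ⟨0, Nat.zero_le _, ?_⟩
    rw [dist_comm, ← hσ.2.1, hσ.1 0 ⟨le_rfl, dist_nonneg⟩ s hs, zero_sub, abs_neg,
      abs_of_nonneg hs.1]
    rcases Nat.le_one_iff_eq_zero_or_eq_one.1 (by simpa using hN) with rfl | rfl
    · simpa using hs.2.trans (by simpa using hG)
    · simpa using hs.2.trans (hc 0 one_pos)
  | succ k ih =>
    set M := N / 2
    obtain ⟨σ₁, hσ₁⟩ := hX (c 0) (c M)
    obtain ⟨σ₂, hσ₂⟩ := hX (c M) (c N)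
    obtain ⟨q, hq, hpq⟩ := hyperbolic_iff.1 h _ _ _ _ _ _ hσ.symm hσ₁ hσ₂ (σ s)
      ⟨dist (c 0) (c N) - s, by rw [dist_comm]; constructor <;> linarith [hs.1, hs.2],
        by simp⟩
    rcases hq with ⟨t, ht, rfl⟩ | ⟨t, ht, rfl⟩
    · obtain ⟨i, hi, hid⟩ := ih (by omega) (hc.mono le_rfl (by omega)) hσ₁ ht
      exact ⟨i, by omega, by push_cast; linarith [dist_triangle (σ s) (σ₁ t) (c i)]⟩
    · have hNM : M + (N - M) = N := by omega
      obtain ⟨i, hi, hid⟩ := ih (N := N - M) (c := fun i => c (M + i))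
        (by rw [pow_succ] at hN; omega) (hc.shift M) (by simpa [hNM] using hσ₂)
        (by simpa [hNM] using ht)
      exact ⟨M + i, by omega, by push_cast; linarith [dist_triangle (σ s) (σ₂ t) (c (M + i))]⟩

lemma sq_le_two_mul_two_pow (k : ℕ) : k ^ 2 ≤ 2 * 2 ^ k := by
  induction k with
  | zero => simp
  | succ k ih => rw [pow_succ 2 k]; nlinarith [k.lt_two_pow_self]

lemma natCast_le_of_two_pow_le {A B : ℝ} (hA : 0 ≤ A) (hB : 0 ≤ B) {k : ℕ}
    (h : (2 : ℝ) ^ k ≤ A * k + B) : (k : ℝ) ≤ 2 * A + B + 1 := by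
  have hsq : (k : ℝ) ^ 2 ≤ 2 * 2 ^ k := by exact_mod_cast sq_le_two_mul_two_pow k
  nlinarith [sq_nonneg ((k : ℝ) - 2 * A), k.cast_nonneg (α := ℝ)]

lemma le_of_forall_two_pow_le {δ G D a b : ℝ} {M : ℕ} (hδ : 0 ≤ δ) (hG : 0 ≤ G) (ha : 0 ≤ a)
    (hb : 0 ≤ b) (hM : (M : ℝ) ≤ a * D + b) (hD : ∀ k : ℕ, M ≤ 2 ^ k → D ≤ k * δ + G) :
    D ≤ (4 * a * δ + 2 * a * G + 2 * b + 2) * δ + G := by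
  have hk : ((2 : ℕ) ^ Nat.clog 2 M : ℝ) ≤ 2 * M + 1 := by
    rcases le_or_gt M 1 with hM1 | hM1
    · simp [Nat.clog_of_right_le_one hM1]
    · have hlt := Nat.pow_pred_clog_lt_self one_lt_two hM1
      have hpos := Nat.clog_pos one_lt_two hM1
      have : 2 ^ Nat.clog 2 M ≤ 2 * M := by
        rw [← Nat.succ_pred_eq_of_pos hpos, pow_succ]; omega
      exact_mod_cast this.trans (Nat.le_succ _)
  have hDk := hD _ (Nat.le_pow_clog one_lt_two M)
  set k := Nat.clog 2 M
  have hkbound : (k : ℝ) ≤ 2 * (2 * a * δ) + (2 * a * G + 2 * b + 1) + 1 :=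
    natCast_le_of_two_pow_le (by positivity) (by positivity) (by push_cast at hk; nlinarith)
  nlinarith

structure IsQuasiGeodesicPath (K C G : ℝ) (N : ℕ) (c : ℕ → X) : Prop where
  isCoarsePath : IsCoarsePath G N c
  abs_sub_le : ∀ i ≤ N, ∀ j ≤ N, |(i : ℝ) - j| ≤ K * dist (c i) (c j) + C

lemma IsCompact.exists_farthest {S : Set X} (hS : IsCompact S) (hne : S.Nonempty) (c : ℕ → X)
    (N : ℕ) : ∃ x₀ ∈ S, ∃ D : ℝ,
      (∀ p ∈ S, ∃ i ≤ N, dist p (c i) ≤ D) ∧ ∀ i ≤ N, D ≤ dist x₀ (c i) := by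
  set T := c '' Iic N
  have hT : IsCompact T := ((finite_Iic N).image c).isCompact
  have hTne : T.Nonempty := ⟨c 0, 0, Nat.zero_le N, rfl⟩
  obtain ⟨x₀, hx₀, hmax⟩ := hS.exists_isMaxOn hne (continuous_infDist_pt T).continuousOn
  refine ⟨x₀, hx₀, infDist x₀ T, fun p hp => ?_, fun i hi => infDist_le_dist_of_mem ⟨i, hi, rfl⟩⟩
  obtain ⟨_, ⟨i, hi, rfl⟩, hpi⟩ := hT.exists_infDist_eq_dist hTne p
  exact ⟨i, hi, hpi ▸ hmax hp⟩

lemma GeodesicSpace.exists_coarsePath (hX : GeodesicSpace X) (x y : X) :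
    ∃ e : ℕ → X, IsCoarsePath 1 ⌈dist x y⌉₊ e ∧ e 0 = x ∧ e ⌈dist x y⌉₊ = y ∧
      ∀ i, dist x (e i) ≤ dist x y ∧ dist (e i) y ≤ dist x y := by
  obtain ⟨γ, hγ⟩ := hX x y
  exact ⟨_, .of_geodesicFrom hγ, hγ.sample_zero, hγ.sample_ceil, hγ.dist_sample_le_dist⟩

lemma exists_anchor {c : ℕ → X} {N : ℕ} {x₀ p : X} {D : ℝ} (hfar : ∀ i ≤ N, D ≤ dist x₀ (c i))
    (hnear : ∃ i ≤ N, dist p (c i) ≤ D) (hp : 2 * D ≤ dist x₀ p ∨ ∃ i ≤ N, p = c i) :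
    ∃ i ≤ N, dist p (c i) ≤ D ∧ D + dist p (c i) ≤ dist x₀ p := by
  obtain ⟨i, hi, hpi⟩ := hnear
  rcases hp with hp | ⟨l, hl, rfl⟩
  · exact ⟨i, hi, hpi, by linarith⟩
  · exact ⟨l, hl, by simpa using dist_nonneg.trans hpi, by simpa using hfar l hl⟩

/-- `le_of_forall_two_pow_le` with the length `(6 K + 2) D + C + 2` of `exists_detour`. -/
def morseBound (δ K C G : ℝ) : ℝ :=
  (4 * (6 * K + 2) * δ + 2 * (6 * K + 2) * G + 2 * (C + 2) + 2) * δ + G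

namespace IsQuasiGeodesicPath

variable {K C G : ℝ} {N : ℕ} {c : ℕ → X}

/-- Go straight from `y` to a point of `c`, follow `c`, then go straight to `z`. -/
lemma exists_detour (hX : GeodesicSpace X) (hc : IsQuasiGeodesicPath K C G N c) (hK : 0 ≤ K)
    (hG : 1 ≤ G) {x₀ y z : X} {D : ℝ} (hfar : ∀ i ≤ N, D ≤ dist x₀ (c i))
    (hyz : dist y z ≤ 4 * D) {i j : ℕ} (hi : i ≤ N) (hj : j ≤ N) (hyi : dist y (c i) ≤ D)
    (hzj : dist z (c j) ≤ D) (hy : D + dist y (c i) ≤ dist x₀ y)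
    (hz : D + dist z (c j) ≤ dist x₀ z) :
    ∃ (M : ℕ) (e : ℕ → X), (M : ℝ) ≤ (6 * K + 2) * D + C + 2 ∧ IsCoarsePath G M e ∧
      e 0 = y ∧ e M = z ∧ ∀ t ≤ M, D ≤ dist x₀ (e t) := by
  obtain ⟨e₁, he₁, he₁0, he₁M, he₁d⟩ := hX.exists_coarsePath y (c i)
  obtain ⟨n, e₂, hn, he₂, he₂0, he₂n, he₂c⟩ := hc.isCoarsePath.exists_segment hi hj
  obtain ⟨e₃, he₃, he₃0, he₃M, he₃d⟩ := hX.exists_coarsePath (c j) z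
  set M₁ := ⌈dist y (c i)⌉₊
  set M₃ := ⌈dist (c j) z⌉₊
  have h₁₂ : e₁ M₁ = e₂ 0 := he₁M.trans he₂0.symm
  have h₂₃ : appendPath e₁ M₁ e₂ (M₁ + n) = e₃ 0 := by rw [appendPath_add h₁₂, he₂n, he₃0]
  have hM₁ : (M₁ : ℝ) ≤ D + 1 := (Nat.ceil_lt_add_one dist_nonneg).le.trans (by linarith)
  have hM₃ : (M₃ : ℝ) ≤ D + 1 :=
    (Nat.ceil_lt_add_one dist_nonneg).le.trans (by rw [dist_comm]; linarith)
  have hij : dist (c i) (c j) ≤ 6 * D := by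
    linarith [dist_triangle4 (c i) y z (c j), dist_comm (c i) y]
  have hn' : (n : ℝ) ≤ 6 * K * D + C := by
    rw [hn]; nlinarith [hc.abs_sub_le i hi j hj]
  refine ⟨M₁ + n + M₃, appendPath (appendPath e₁ M₁ e₂) (M₁ + n) e₃, by push_cast; linarith,
    (he₁.mono hG le_rfl |>.append he₂ h₁₂).append (he₃.mono hG le_rfl) h₂₃,
    by rw [appendPath_zero, appendPath_zero, he₁0], by rw [appendPath_add h₂₃, he₃M], ?_⟩
  refine forall_appendPath (fun p => D ≤ dist x₀ p)
    (forall_appendPath (fun p => D ≤ dist x₀ p) (fun t _ => ?_) fun t ht => ?_) fun t _ => ?_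
  · linarith [dist_triangle x₀ (e₁ t) y, dist_comm (e₁ t) y, (he₁d t).1]
  · obtain ⟨l, hl, hel⟩ := he₂c t ht
    exact hel ▸ hfar l hl
  · linarith [dist_triangle x₀ (e₃ t) z, (he₃d t).2, dist_comm z (c j)]

/-- The Morse lemma, first half. The point `x₀` of the geodesic farthest from `c`, at distance `D`,
is avoided by a detour of `O(D)` steps through `c` between the points of the geodesic at distance
`2D` from `x₀`, so `D = O(log D)` by `Hyperbolic.exists_dist_le_of_isCoarsePath`. -/
theorem exists_dist_le_of_mem_geodesic (hX : GeodesicSpace X) {δ : ℝ} (hXδ : Hyperbolic X δ)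
    (hδ : 0 ≤ δ) (hc : IsQuasiGeodesicPath K C G N c) (hK : 0 ≤ K) (hC : 0 ≤ C) (hG : 1 ≤ G)
    {σ : ℝ → X} (hσ : GeodesicFrom σ (c 0) (c N)) {s : ℝ} (hs : s ∈ Icc 0 (dist (c 0) (c N))) :
    ∃ i ≤ N, dist (σ s) (c i) ≤ morseBound δ K C G := by
  set L := dist (c 0) (c N)
  have hL : 0 ≤ L := dist_nonneg
  obtain ⟨_, ⟨s₀, hs₀, rfl⟩, D, hnear, hfar⟩ :=
    (isCompact_Icc.image_of_continuousOn hσ.continuousOn).exists_farthest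
      ⟨σ 0, 0, ⟨le_rfl, hL⟩, rfl⟩ c N
  suffices hD : D ≤ morseBound δ K C G by
    obtain ⟨i, hi, hid⟩ := hnear _ ⟨s, hs, rfl⟩
    exact ⟨i, hi, hid.trans hD⟩
  have hD : 0 ≤ D := by
    obtain ⟨i, -, hi⟩ := hnear _ ⟨s₀, hs₀, rfl⟩
    exact dist_nonneg.trans hi
  set sm := max 0 (s₀ - 2 * D)
  set sp := min L (s₀ + 2 * D)
  have hsm : sm ∈ Icc 0 L := ⟨le_max_left _ _, max_le hL (by linarith [hs₀.2])⟩
  have hsp : sp ∈ Icc 0 L := ⟨le_min hL (by linarith [hs₀.1]), min_le_left _ _⟩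
  have hsms₀ : sm ≤ s₀ := max_le hs₀.1 (by linarith)
  have hs₀sp : s₀ ≤ sp := le_min hs₀.2 (by linarith)
  have hdist {a b : ℝ} (ha : a ∈ Icc 0 L) (hb : b ∈ Icc 0 L) (hab : a ≤ b) :
      dist (σ a) (σ b) = b - a := by
    rw [hσ.1 a ha b hb, abs_sub_comm, abs_of_nonneg (by linarith)]
  obtain ⟨i, hi, hyi, hy⟩ := exists_anchor hfar (hnear _ ⟨sm, hsm, rfl⟩) <| by
    rcases le_total 0 (s₀ - 2 * D) with h | h
    · left; rw [dist_comm, hdist hsm hs₀ hsms₀, show sm = s₀ - 2 * D from max_eq_right h]; linarith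
    · right; exact ⟨0, Nat.zero_le N, by rw [show sm = 0 from max_eq_left h, hσ.2.1]⟩
  obtain ⟨j, hj, hzj, hz⟩ := exists_anchor hfar (hnear _ ⟨sp, hsp, rfl⟩) <| by
    rcases le_total (s₀ + 2 * D) L with h | h
    · left; rw [hdist hs₀ hsp hs₀sp, show sp = s₀ + 2 * D from min_eq_right h]; linarith
    · right; exact ⟨N, le_rfl, by rw [show sp = L from min_eq_left h, hσ.2.2]⟩
  have hsmsp := hdist hsm hsp (hsms₀.trans hs₀sp)
  obtain ⟨M, e, hM, he, he0, heM, hefar⟩ := hc.exists_detour hX hK hG hfar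
    (by rw [hsmsp]; linarith [le_max_right 0 (s₀ - 2 * D), min_le_right L (s₀ + 2 * D)])
    hi hj hyi hzj hy hz
  refine le_of_forall_two_pow_le (a := 6 * K + 2) (b := C + 2) hδ (by linarith) (by linarith)
    (by linarith) (by linarith) fun k hk => ?_
  have hτ : GeodesicFrom (fun t => σ (sm + t)) (e 0) (e M) := by
    rw [he0, heM]; exact hσ.restrict hsm.1 (hsms₀.trans hs₀sp) hsp.2
  obtain ⟨t, ht, hdt⟩ := hXδ.exists_dist_le_of_isCoarsePath hX (by linarith) k hk he hτ
    (s := s₀ - sm) (by rw [he0, heM, hsmsp]; constructor <;> linarith)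
  simp only [add_sub_cancel] at hdt
  exact (hefar t ht).trans hdt

/-- The Morse lemma, second half. The geodesic is covered by the `Da`-balls around the points of
`c` before and after `c j`; being connected it meets both families, which forces two points of `c`
on either side of `c j` to be `2 Da`-close, hence close in index. -/
theorem exists_mem_geodesic_dist_le (hc : IsQuasiGeodesicPath K C G N c) (hK : 0 ≤ K)
    (hG : 0 ≤ G) {σ : ℝ → X} (hσ : GeodesicFrom σ (c 0) (c N)) {Da : ℝ}
    (hnear : ∀ s ∈ Icc 0 (dist (c 0) (c N)), ∃ i ≤ N, dist (σ s) (c i) ≤ Da) {j : ℕ}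
    (hj : j ≤ N) :
    ∃ s ∈ Icc 0 (dist (c 0) (c N)), dist (c j) (σ s) ≤ G * (2 * K * Da + C) + Da := by
  have hL : 0 ≤ dist (c 0) (c N) := dist_nonneg
  have hDa : 0 ≤ Da := by
    obtain ⟨i, -, hi⟩ := hnear 0 ⟨le_rfl, hL⟩
    exact dist_nonneg.trans hi
  set A := ⋃ i ∈ Iic j, closedBall (c i) Da
  set B := ⋃ i ∈ Icc j N, closedBall (c i) Da
  have hAB : σ '' Icc 0 (dist (c 0) (c N)) ⊆ A ∪ B := by
    rintro _ ⟨s, hs, rfl⟩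
    obtain ⟨i, hi, hid⟩ := hnear s hs
    rcases le_total i j with hij | hji
    · exact Or.inl (mem_biUnion (x := i) hij hid)
    · exact Or.inr (mem_biUnion (x := i) ⟨hji, hi⟩ hid)
  obtain ⟨_, ⟨s, hs, rfl⟩, hA, hB⟩ := isPreconnected_closed_iff.1
    (isPreconnected_Icc.image σ hσ.continuousOn) A B
    ((finite_Iic j).isClosed_biUnion fun _ _ => isClosed_closedBall)
    ((finite_Icc j N).isClosed_biUnion fun _ _ => isClosed_closedBall) hAB
    ⟨σ 0, mem_image_of_mem σ ⟨le_rfl, hL⟩,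
      mem_biUnion (x := 0) (Nat.zero_le j) (by simp [hσ.2.1, hDa])⟩
    ⟨σ (dist (c 0) (c N)), mem_image_of_mem σ ⟨hL, le_rfl⟩,
      mem_biUnion (x := N) ⟨hj, le_rfl⟩ (by simp [hσ.2.2, hDa])⟩
  obtain ⟨x, hxj, hx⟩ := mem_iUnion₂.1 hA
  obtain ⟨y, ⟨hjy, hyN⟩, hy⟩ := mem_iUnion₂.1 hB
  have hxy : (y : ℝ) - x ≤ 2 * K * Da + C := by
    have := hc.abs_sub_le x (hxj.trans hj) y hyN
    rw [mem_closedBall] at hx hy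
    nlinarith [abs_sub_comm (x : ℝ) y, le_abs_self ((y : ℝ) - x),
      dist_triangle_left (c x) (c y) (σ s)]
  have hjy' : (j : ℝ) ≤ y := by exact_mod_cast hjy
  have hxj' : dist (c x) (c j) ≤ G * (2 * K * Da + C) :=
    (hc.isCoarsePath.dist_le hxj hj).trans (mul_le_mul_of_nonneg_left (by linarith) hG)
  rw [mem_closedBall] at hx
  exact ⟨s, hs, by linarith [dist_triangle_left (c j) (σ s) (c x), dist_comm (c x) (σ s)]⟩

end IsQuasiGeodesicPath

def qiMorseBound (δ K C : ℝ) : ℝ := morseBound δ K (3 * C + 1) (K * (1 + 3 * C))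

def qiTrackingBound (δ K C : ℝ) : ℝ :=
  K * (1 + 3 * C) * (2 * K * qiMorseBound δ K C + (3 * C + 1)) + qiMorseBound δ K C

def qiHyperbolicBound (δ K C : ℝ) : ℝ :=
  1 + 5 * C + K * (qiTrackingBound δ K C + δ + qiMorseBound δ K C)

section QuasiIsometry

variable {Y : Type*} [MetricSpace Y] {K C δ : ℝ} {f : X → Y} {g : Y → X} {γ : ℝ → Y} {y y' : Y}
  {σ : ℝ → X}

lemma QI.mono {K' C' : ℝ} (hf : QI K C f) (hK : 0 < K) (hKK' : K ≤ K') (hCC' : C ≤ C') :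
    QI K' C' f := by
  refine ⟨fun x z => ⟨?_, ?_⟩, fun y => (hf.2 y).imp fun _ h => h.trans hCC'⟩
  · have : 1 / K' * dist x z ≤ 1 / K * dist x z :=
      mul_le_mul_of_nonneg_right (one_div_le_one_div_of_le hK hKK') dist_nonneg
    linarith [(hf.1 x z).1]
  · have : K * dist x z ≤ K' * dist x z := mul_le_mul_of_nonneg_right hKK' dist_nonneg
    linarith [(hf.1 x z).2]

lemma QI.dist_le_of_nonpos (hf : QI K C f) (hK : K ≤ 0) (y y' : Y) : dist y y' ≤ 3 * C := by
  obtain ⟨x, hx⟩ := hf.2 y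
  obtain ⟨x', hx'⟩ := hf.2 y'
  have : K * dist x x' ≤ 0 := mul_nonpos_of_nonpos_of_nonneg hK dist_nonneg
  linarith [(hf.1 x x').2, dist_triangle4 y (f x) (f x') y', dist_comm (f x') y']

namespace QIEmb

variable (hf : QIEmb K C f) (hg : ∀ y, dist y (f (g y)) ≤ C)
include hf hg

lemma dist_le_of_coarseInverse (y y' : Y) : dist y y' ≤ K * dist (g y) (g y') + 3 * C := by
  linarith [(hf (g y) (g y')).2, dist_triangle4 y (f (g y)) (f (g y')) y', hg y, hg y',
    dist_comm (f (g y')) y']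

lemma dist_coarseInverse_le (hK : 0 < K) (y y' : Y) :
    dist (g y) (g y') ≤ K * dist y y' + 3 * K * C := by
  have hlow := (hf (g y) (g y')).1
  have hup : dist (f (g y)) (f (g y')) ≤ dist y y' + 2 * C := by
    linarith [dist_triangle4 (f (g y)) y y' (f (g y')), hg y, hg y', dist_comm (f (g y)) y]
  have := mul_le_mul_of_nonneg_left (hlow.trans hup) hK.le
  rw [mul_sub, ← mul_assoc, mul_one_div_cancel hK.ne', one_mul] at this
  linarith

lemma isQuasiGeodesicPath (hK : 0 < K) (hγ : GeodesicFrom γ y y') :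
    IsQuasiGeodesicPath K (3 * C + 1) (K * (1 + 3 * C)) ⌈dist y y'⌉₊
      (g ∘ sample γ (dist y y')) where
  isCoarsePath i _ := by
    have hstep := IsCoarsePath.of_geodesicFrom hγ i (by omega)
    have := hf.dist_coarseInverse_le hg hK (sample γ (dist y y') i) (sample γ (dist y y') (i + 1))
    simp only [Function.comp]
    nlinarith
  abs_sub_le i hi j hj := by
    simp only [Function.comp]
    linarith [hγ.abs_sub_le_dist_sample hi hj,
      hf.dist_le_of_coarseInverse hg (sample γ (dist y y') i) (sample γ (dist y y') j)]

variable (hX : GeodesicSpace X) (hXδ : Hyperbolic X δ) (hδ : 0 ≤ δ) (hK : 1 ≤ K) (hC : 0 ≤ C)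
  (hγ : GeodesicFrom γ y y') (hσ : GeodesicFrom σ (g y) (g y'))
include hX hXδ hδ hK hC hγ hσ

lemma exists_mem_side_dist_le {s : ℝ} (hs : s ∈ Icc 0 (dist (g y) (g y'))) :
    ∃ q ∈ γ '' Icc 0 (dist y y'), dist (f (σ s)) q ≤ K * qiMorseBound δ K C + 2 * C := by
  have hσ' : GeodesicFrom σ ((g ∘ sample γ (dist y y')) 0)
      ((g ∘ sample γ (dist y y')) ⌈dist y y'⌉₊) := by
    simpa only [Function.comp, hγ.sample_zero, hγ.sample_ceil] using hσ
  obtain ⟨i, -, hi⟩ := (hf.isQuasiGeodesicPath hg (by linarith) hγ).exists_dist_le_of_mem_geodesic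
    hX hXδ hδ (by linarith) (by linarith) (by nlinarith) hσ' (s := s)
    (by simpa only [Function.comp, hγ.sample_zero, hγ.sample_ceil] using hs)
  refine ⟨_, sample_mem_image dist_nonneg i, ?_⟩
  have hKi := mul_le_mul_of_nonneg_left hi (by linarith : 0 ≤ K)
  simp only [Function.comp] at hKi
  rw [qiMorseBound]
  linarith [(hf (σ s) (g (sample γ (dist y y') i))).2, hg (sample γ (dist y y') i),
    dist_triangle (f (σ s)) (f (g (sample γ (dist y y') i))) (sample γ (dist y y') i),
    dist_comm (f (g (sample γ (dist y y') i))) (sample γ (dist y y') i)]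

lemma exists_mem_geodesic_dist_le {t : ℝ} (ht : t ∈ Icc 0 (dist y y')) :
    ∃ s ∈ Icc 0 (dist (g y) (g y')),
      dist (γ t) (f (σ s)) ≤ 1 + 2 * C + K * qiTrackingBound δ K C := by
  have hσ' : GeodesicFrom σ ((g ∘ sample γ (dist y y')) 0)
      ((g ∘ sample γ (dist y y')) ⌈dist y y'⌉₊) := by
    simpa only [Function.comp, hγ.sample_zero, hγ.sample_ceil] using hσ
  have hc := hf.isQuasiGeodesicPath hg (by linarith) hγ
  obtain ⟨i, hi, hti⟩ := hγ.exists_dist_sample_le_one ht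
  obtain ⟨s, hs, his⟩ := hc.exists_mem_geodesic_dist_le (by linarith) (by nlinarith) hσ'
    (fun s hs => hc.exists_dist_le_of_mem_geodesic hX hXδ hδ (by linarith) (by linarith)
      (by nlinarith) hσ' hs) hi
  refine ⟨s, by simpa only [Function.comp, hγ.sample_zero, hγ.sample_ceil] using hs, ?_⟩
  have hKi := mul_le_mul_of_nonneg_left his (by linarith : 0 ≤ K)
  simp only [Function.comp] at hKi
  rw [qiTrackingBound, qiMorseBound]
  linarith [(hf (g (sample γ (dist y y') i)) (σ s)).2, hg (sample γ (dist y y') i),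
    dist_triangle4 (γ t) (sample γ (dist y y') i) (f (g (sample γ (dist y y') i))) (f (σ s))]

end QIEmb

theorem QI.hyperbolic (hX : GeodesicSpace X) (hXδ : Hyperbolic X δ) (hδ : 0 ≤ δ) (hK : 1 ≤ K)
    (hC : 0 ≤ C) (hf : QI K C f) : Hyperbolic Y (qiHyperbolicBound δ K C) := by
  choose g hg using hf.2
  refine hyperbolic_iff.2 fun a b c γ₁ γ₂ γ₃ h₁ h₂ h₃ _ ⟨t, ht, hp⟩ => hp ▸ ?_
  obtain ⟨σ₁, hσ₁⟩ := hX (g a) (g b)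
  obtain ⟨σ₂, hσ₂⟩ := hX (g b) (g c)
  obtain ⟨σ₃, hσ₃⟩ := hX (g c) (g a)
  obtain ⟨s, hs, hts⟩ := hf.1.exists_mem_geodesic_dist_le hg hX hXδ hδ hK hC h₁ hσ₁ ht
  obtain ⟨x', hx', hsx'⟩ := hyperbolic_iff.1 hXδ _ _ _ _ _ _ hσ₁ hσ₂ hσ₃ _ ⟨s, hs, rfl⟩
  have hfx' : dist (f (σ₁ s)) (f x') ≤ K * δ + C :=
    (hf.1 _ _).2.trans (by nlinarith)
  have hbound {q : Y} (hq : dist (f x') q ≤ K * qiMorseBound δ K C + 2 * C) :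
      dist (γ₁ t) q ≤ qiHyperbolicBound δ K C := by
    rw [qiHyperbolicBound]
    linarith [dist_triangle4 (γ₁ t) (f (σ₁ s)) (f x') q]
  rcases hx' with ⟨s', hs', rfl⟩ | ⟨s', hs', rfl⟩
  · obtain ⟨q, hq, hd⟩ := hf.1.exists_mem_side_dist_le hg hX hXδ hδ hK hC h₂ hσ₂ hs'
    exact ⟨q, Or.inl hq, hbound hd⟩
  · obtain ⟨q, hq, hd⟩ := hf.1.exists_mem_side_dist_le hg hX hXδ hδ hK hC h₃ hσ₃ hs'
    exact ⟨q, Or.inr hq, hbound hd⟩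

end QuasiIsometry

theorem hyperbolicity_quasiIsometry_invariant_general (δ K C : ℝ) :
    ∃ δ' : ℝ, 0 ≤ δ' ∧
      ∀ (X Y : Type) [MetricSpace X] [MetricSpace Y] (f : X → Y),
        GeodesicSpace X → GeodesicSpace Y → QI K C f →
        Hyperbolic X δ → Hyperbolic Y δ' := by
  refine ⟨max (3 * max C 0) (qiHyperbolicBound (max δ 0) (max K 1) (max C 0)),
    le_max_of_le_left (by positivity), fun X Y _ _ f hX _ hf hXδ => ?_⟩
  rcases le_or_gt K 0 with hK | hK
  · exact (hyperbolic_of_forall_dist_le fun y y' =>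
      (hf.dist_le_of_nonpos hK y y').trans (by gcongr; exact le_max_left C 0)).mono
      (le_max_left _ _)
  · exact ((hf.mono hK (le_max_left K 1) (le_max_left C 0)).hyperbolic hX
      (hXδ.mono (le_max_left δ 0)) (le_max_right _ _) (le_max_right _ _) (le_max_right _ _)).mono
      (le_max_right _ _)

/-- Hyperbolicity is a quasi-isometry invariant of geodesic metric spaces, with
the new constant depending only on δ and the quasi-isometry constants. -/
theorem hyperbolicity_quasiIsometry_invariant (δ K C : ℝ) (hδ : 0 ≤ δ) :
    ∃ δ' : ℝ, 0 ≤ δ' ∧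
      ∀ (X Y : Type) [MetricSpace X] [MetricSpace Y] (f : X → Y),
        GeodesicSpace X → GeodesicSpace Y → QI K C f →
        Hyperbolic X δ → Hyperbolic Y δ' :=
  hyperbolicity_quasiIsometry_invariant_general δ K C
end

section
/- The group with presentation ⟨u, v | u⁴ = 1, u² = v³⟩ is isomorphic to SL(2,ℤ), via u ↦ [[0,−1],[1,0]] and v ↦ [[0,−1],[1,1]]. -/
/-- The relations u⁴ = 1 and u² = v³ (as elements of the free group on two
generators, with u the 0th and v the 1st generator). -/
def sl2Rels : Set (FreeGroup (Fin 2)) :=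
  {FreeGroup.of 0 ^ 4, FreeGroup.of 0 ^ 2 * (FreeGroup.of 1 ^ 3)⁻¹}

def uMat : Matrix.SpecialLinearGroup (Fin 2) ℤ :=
  ⟨!![0, -1; 1, 0], by norm_num [Matrix.det_fin_two_of]⟩

def vMat : Matrix.SpecialLinearGroup (Fin 2) ℤ :=
  ⟨!![0, -1; 1, 1], by norm_num [Matrix.det_fin_two_of]⟩

/-! The relations hold for `S = uMat` and `S T = vMat`, which generate SL(2,ℤ), so `u ↦ uMat`,
`v ↦ vMat` is a surjection. In the presented group the element `z = u² = v³` is central with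
`z² = 1`, and the quotient by `⟨z⟩` is a quotient of `ℤ/2 ∗ ℤ/3`. This free product acts
faithfully on the upper half-plane by ping-pong: `S` maps `Re < 0` into `Re > 0`, while `v` and
`v² = -v⁻¹` map `Re > 0` into `Re < 0`. So a kernel element is trivial modulo `z`, i.e. it is `1`
or `z`, and `z ↦ -1 ≠ 1`. -/

open scoped MatrixGroups Pointwise
open Monoid ModularGroup UpperHalfPlane

section ZModHom

variable {G : Type*} [Group G]

def zmodHom (n : ℕ) [NeZero n] (g : G) (hg : g ^ n = 1) : Multiplicative (ZMod n) →* G where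
  toFun x := g ^ x.toAdd.val
  map_one' := by simp
  map_mul' x y := by rw [toAdd_mul, ZMod.val_add, ← pow_eq_pow_mod _ hg, pow_add]

lemma zmodHom_ofAdd_one (n : ℕ) [NeZero n] (g : G) (hg : g ^ n = 1) :
    zmodHom n g hg (.ofAdd 1) = g := by
  show g ^ (1 : ZMod n).val = g
  rw [ZMod.val_one_eq_one_mod, ← pow_eq_pow_mod _ hg, pow_one]

end ZModHom

lemma Subgroup.normal_of_le_center {G : Type*} [Group G] {H : Subgroup G}
    (h : H ≤ Subgroup.center G) : H.Normal :=
  ⟨fun n hn g => by rwa [Subgroup.mem_center_iff.mp (h hn) g, mul_inv_cancel_right]⟩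

section Lift

variable {G : Type*} [Group G]

def sl2Lift (a b : G) (ha : a ^ 4 = 1) (hab : a ^ 2 = b ^ 3) : PresentedGroup sl2Rels →* G :=
  PresentedGroup.toGroup (f := ![a, b]) <| by
    rintro r (rfl | rfl)
    · simpa using ha
    · simpa [mul_inv_eq_one] using hab

@[simp] lemma sl2Lift_of_zero (a b : G) (ha : a ^ 4 = 1) (hab : a ^ 2 = b ^ 3) :
    sl2Lift a b ha hab (.of 0) = a := PresentedGroup.toGroup.of _

@[simp] lemma sl2Lift_of_one (a b : G) (ha : a ^ 4 = 1) (hab : a ^ 2 = b ^ 3) :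
    sl2Lift a b ha hab (.of 1) = b := PresentedGroup.toGroup.of _

end Lift

lemma uMat_eq_S : uMat = S := rfl

lemma vMat_eq_S_mul_T : vMat = S * T := by decide

lemma uMat_sq : uMat ^ 2 = -1 := by decide

lemma vMat_pow_three : vMat ^ 3 = -1 := by decide

lemma vMat_sq : vMat ^ 2 = -vMat⁻¹ := by decide

lemma re_S_smul (z : ℍ) : (S • z).re = -z.re / Complex.normSq z := by
  rw [modular_S_smul, mk_re, Complex.inv_re, Complex.normSq_neg, Complex.neg_re, coe_re, neg_div]

lemma re_S_smul_pos {z : ℍ} (hz : z.re < 0) : 0 < (S • z).re := by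
  rw [re_S_smul]
  exact div_pos (neg_pos.mpr hz) (Complex.normSq_pos.mpr z.ne_zero)

lemma re_S_smul_neg {z : ℍ} (hz : 0 < z.re) : (S • z).re < 0 := by
  rw [re_S_smul]
  exact div_neg_of_neg_of_pos (neg_neg_iff_pos.mpr hz) (Complex.normSq_pos.mpr z.ne_zero)

lemma re_vMat_smul_neg {z : ℍ} (hz : 0 < z.re) : (vMat • z).re < 0 := by
  rw [vMat_eq_S_mul_T, mul_smul]
  apply re_S_smul_neg
  rw [modular_T_smul, vadd_re]
  linarith

lemma re_vMat_inv_smul_neg {z : ℍ} (hz : 0 < z.re) : (vMat⁻¹ • z).re < 0 := by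
  rw [vMat_eq_S_mul_T, mul_inv_rev, mul_smul, S_inv, SL_neg_smul, ← zpow_neg_one,
    modular_T_zpow_smul, vadd_re]
  push_cast
  linarith [re_S_smul_neg hz]

namespace SL2ZPresentation

local notation "P" => PresentedGroup sl2Rels

def genOrder : Fin 2 → ℕ := ![2, 3]

instance (i : Fin 2) : NeZero (genOrder i) := by
  fin_cases i <;> exact ⟨by decide⟩

abbrev CyclicFactor (i : Fin 2) : Type := Multiplicative (ZMod (genOrder i))

def z : P := .of 0 ^ 2

lemma of_pow_genOrder (i : Fin 2) : (.of i : P) ^ genOrder i = z := by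
  fin_cases i
  · rfl
  · exact (PresentedGroup.mk_eq_mk_of_mul_inv_mem (Or.inr rfl)).symm

lemma z_sq : z ^ 2 = 1 := by
  rw [z, ← pow_mul]
  exact PresentedGroup.one_of_mem (Or.inl rfl)

lemma z_mem_center : z ∈ Subgroup.center P := by
  rw [Subgroup.mem_center_iff]
  refine fun g =>
    (PresentedGroup.generated_by sl2Rels (Subgroup.centralizer {z}) (fun i => ?_) g z rfl).symm
  rw [Subgroup.mem_centralizer_singleton_iff, ← of_pow_genOrder i]
  exact (Commute.self_pow _ _).eq

instance : (Subgroup.zpowers z).Normal :=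
  Subgroup.normal_of_le_center (Subgroup.zpowers_le.mpr z_mem_center)

lemma eq_one_or_eq_z_of_mem_zpowers {g : P} (hg : g ∈ Subgroup.zpowers z) : g = 1 ∨ g = z := by
  obtain ⟨k, rfl⟩ := Subgroup.mem_zpowers_iff.mp hg
  rw [zpow_eq_zpow_emod' k z_sq]
  rcases Int.emod_two_eq_zero_or_one k with h | h <;> simp [h]

def toSL : P →* SL(2, ℤ) :=
  sl2Lift uMat vMat (by decide) (by rw [uMat_sq, vMat_pow_three])

lemma toSL_of_zero : toSL (.of 0) = uMat := sl2Lift_of_zero ..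

lemma toSL_of_one : toSL (.of 1) = vMat := sl2Lift_of_one ..

lemma toSL_z : toSL z = -1 := by
  rw [z, map_pow, toSL_of_zero, uMat_sq]

lemma toSL_surjective : Function.Surjective toSL := by
  rw [← MonoidHom.range_eq_top, eq_top_iff, ← SpecialLinearGroup.SL2Z_generators,
    Subgroup.closure_le]
  rintro _ (rfl | rfl)
  · exact ⟨.of 0, toSL_of_zero⟩
  · refine ⟨(.of 0)⁻¹ * .of 1, ?_⟩
    rw [map_mul, map_inv, toSL_of_zero, toSL_of_one, vMat_eq_S_mul_T, ← uMat_eq_S,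
      inv_mul_cancel_left]

def toCoprod : P →* CoprodI CyclicFactor :=
  sl2Lift (.of (.ofAdd 1 : CyclicFactor 0)) (.of (.ofAdd 1 : CyclicFactor 1))
    (by rw [← map_pow, show (.ofAdd 1 : CyclicFactor 0) ^ 4 = 1 by decide, map_one])
    (by
      rw [← map_pow (CoprodI.of (i := 0)), ← map_pow (CoprodI.of (i := 1)),
        show (.ofAdd 1 : CyclicFactor 0) ^ 2 = 1 by decide,
        show (.ofAdd 1 : CyclicFactor 1) ^ 3 = 1 by decide, map_one, map_one])

def coprodToQuot : CoprodI CyclicFactor →* P ⧸ Subgroup.zpowers z :=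
  CoprodI.lift fun i => zmodHom (genOrder i) (QuotientGroup.mk (.of i)) <| by
    rw [← QuotientGroup.mk_pow, of_pow_genOrder, QuotientGroup.eq_one_iff]
    exact Subgroup.mem_zpowers z

lemma coprodToQuot_comp_toCoprod :
    coprodToQuot.comp toCoprod = QuotientGroup.mk' (Subgroup.zpowers z) := by
  ext i
  fin_cases i <;> simp [toCoprod, coprodToQuot, zmodHom_ofAdd_one]

noncomputable abbrev act : SL(2, ℤ) →* Equiv.Perm ℍ := MulAction.toPermHom SL(2, ℤ) ℍ

lemma act_neg_one : act (-1) = 1 := by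
  ext w
  exact congrArg _ ((SL_neg_smul 1 w).trans (one_smul _ w))

noncomputable def factorToPerm (i : Fin 2) : CyclicFactor i →* Equiv.Perm ℍ :=
  zmodHom (genOrder i) (act (toSL (.of i))) <| by
    rw [← map_pow, ← map_pow, of_pow_genOrder, toSL_z, act_neg_one]

noncomputable def coprodToPerm : CoprodI CyclicFactor →* Equiv.Perm ℍ :=
  CoprodI.lift factorToPerm

lemma coprodToPerm_comp_toCoprod : coprodToPerm.comp toCoprod = act.comp toSL := by
  ext i
  fin_cases i <;> simp [toCoprod, coprodToPerm, factorToPerm, zmodHom_ofAdd_one]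

lemma exists_factorToPerm_smul_eq_pow_smul {i : Fin 2} {h : CyclicFactor i} (hh : h ≠ 1) :
    ∃ k, 0 < k ∧ k < genOrder i ∧
      ∀ w : ℍ, factorToPerm i h • w = toSL (.of i) ^ k • w := by
  refine ⟨h.toAdd.val, Nat.pos_of_ne_zero ((ZMod.val_ne_zero _).mpr hh), ZMod.val_lt _,
    fun w => ?_⟩
  change act (toSL (.of i)) ^ _ • w = _
  rw [← map_pow]
  rfl

def halfPlanes : Fin 2 → Set ℍ := ![{w | 0 < w.re}, {w | w.re < 0}]

lemma factorToPerm_zero_smul_subset {h : CyclicFactor 0} (hh : h ≠ 1) :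
    factorToPerm 0 h • halfPlanes 1 ⊆ halfPlanes 0 := by
  obtain ⟨k, hk0, hkn, hk⟩ := exists_factorToPerm_smul_eq_pow_smul hh
  obtain rfl : k = 1 := by change k < 2 at hkn; omega
  rw [Set.smul_set_subset_iff]
  intro w hw
  rw [hk, pow_one, toSL_of_zero, uMat_eq_S]
  exact re_S_smul_pos hw

lemma factorToPerm_one_smul_subset {h : CyclicFactor 1} (hh : h ≠ 1) :
    factorToPerm 1 h • halfPlanes 0 ⊆ halfPlanes 1 := by
  obtain ⟨k, hk0, hkn, hk⟩ := exists_factorToPerm_smul_eq_pow_smul hh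
  rw [Set.smul_set_subset_iff]
  intro w hw
  rw [hk, toSL_of_one]
  obtain rfl | rfl : k = 1 ∨ k = 2 := by change k < 3 at hkn; omega
  · rw [pow_one]
    exact re_vMat_smul_neg hw
  · rw [vMat_sq, SL_neg_smul]
    exact re_vMat_inv_smul_neg hw

lemma coprodToPerm_injective : Function.Injective coprodToPerm := by
  refine CoprodI.lift_injective_of_ping_pong factorToPerm ?_ halfPlanes ?_ ?_ ?_
  · refine Or.inr ⟨1, ?_⟩
    rw [Cardinal.mk_fintype, Fintype.card_multiplicative, ZMod.card]
    rfl
  · intro i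
    fin_cases i
    · exact ⟨(1 : ℝ) +ᵥ I, by simp [halfPlanes, vadd_re]⟩
    · exact ⟨(-1 : ℝ) +ᵥ I, by simp [halfPlanes, vadd_re]⟩
  · have h01 : Disjoint (halfPlanes 0) (halfPlanes 1) :=
      Set.disjoint_left.mpr fun w (hw0 : 0 < w.re) (hw1 : w.re < 0) => (hw0.trans hw1).false
    intro i j hij
    fin_cases i <;> fin_cases j
    exacts [absurd rfl hij, h01, h01.symm, absurd rfl hij]
  · intro i j hij h hh
    fin_cases i <;> fin_cases j
    exacts [absurd rfl hij, factorToPerm_zero_smul_subset hh, factorToPerm_one_smul_subset hh,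
      absurd rfl hij]

lemma toSL_injective : Function.Injective toSL := by
  rw [injective_iff_map_eq_one]
  intro g hg
  have hc : toCoprod g = 1 := coprodToPerm_injective <| by
    rw [map_one, ← MonoidHom.comp_apply, coprodToPerm_comp_toCoprod, MonoidHom.comp_apply, hg,
      map_one]
  have hz : g ∈ Subgroup.zpowers z := by
    rw [← QuotientGroup.eq_one_iff, ← QuotientGroup.mk'_apply, ← coprodToQuot_comp_toCoprod,
      MonoidHom.comp_apply, hc, map_one]
  refine (eq_one_or_eq_z_of_mem_zpowers hz).resolve_right fun hgz => ?_
  rw [hgz, toSL_z] at hg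
  exact absurd hg (by decide)

end SL2ZPresentation

/-- The group ⟨u, v ∣ u⁴ = 1, u² = v³⟩ is isomorphic to SL(2,ℤ) via
u ↦ [[0,−1],[1,0]] and v ↦ [[0,−1],[1,1]]. -/
theorem presented_group_iso_SL2Z :
    ∃ φ : PresentedGroup sl2Rels ≃* Matrix.SpecialLinearGroup (Fin 2) ℤ,
      φ (PresentedGroup.of 0) = uMat ∧ φ (PresentedGroup.of 1) = vMat :=
  ⟨MulEquiv.ofBijective SL2ZPresentation.toSL
      ⟨SL2ZPresentation.toSL_injective, SL2ZPresentation.toSL_surjective⟩,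
    SL2ZPresentation.toSL_of_zero, SL2ZPresentation.toSL_of_one⟩
end

section
/- If two sides of a geodesic triangle in a geodesic metric space are N-Morse, then the triangle is δ-thin for some δ depending only on the Morse gauge N. -/
/-- `β` is a (K,C)-quasi-geodesic on the parameter interval `[s,t]`. -/
def QuasiGeodesicOn {X : Type*} [MetricSpace X] (K C : ℝ) (β : ℝ → X) (s t : ℝ) : Prop :=
  ∀ a ∈ Set.Icc s t, ∀ b ∈ Set.Icc s t,
    (1/K) * |a - b| - C ≤ dist (β a) (β b) ∧ dist (β a) (β b) ≤ K * |a - b| + C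

/-- The geodesic `α` (on parameter set `I`) is `N`-Morse: every (K,C)-quasi-geodesic
with endpoints on `α` stays in the `N K C`-neighborhood of `α`. -/
def MorseOn {X : Type*} [MetricSpace X] (N : ℝ → ℝ → ℝ) (α : ℝ → X) (I : Set ℝ) : Prop :=
  ∀ K C : ℝ, 0 < K → 0 ≤ C → ∀ (β : ℝ → X) (s t : ℝ), s ≤ t →
    QuasiGeodesicOn K C β s t → β s ∈ α '' I → β t ∈ α '' I →
    ∀ r ∈ Set.Icc s t, ∃ p ∈ α '' I, dist (β r) p ≤ N K C

/-- Concatenation of a geodesic prefix with a segment to a point. -/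
noncomputable def concatNP {X : Type*} (g σ : ℝ → X) (r : ℝ) : ℝ → X :=
  fun u => if u ≤ r then g u else σ (u - r)

lemma concatNP_left {X : Type*} (g σ : ℝ → X) {r u : ℝ} (h : u ≤ r) :
    concatNP g σ r u = g u := if_pos h

lemma concatNP_right {X : Type*} (g σ : ℝ → X) {r u : ℝ} (h : ¬ u ≤ r) :
    concatNP g σ r u = σ (u - r) := if_neg h

/-- Key lemma: geodesic up to a nearest point to `z`, followed by a geodesic to `z`,
is a (3,0)-quasi-geodesic. -/
lemma concat_key {X : Type*} [MetricSpace X] (g σ : ℝ → X) (L : ℝ)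
    (hg : IsGeodesicOn g (Set.Icc 0 L)) (z : X) (r : ℝ) (hr : r ∈ Set.Icc 0 L)
    (hmin : ∀ u ∈ Set.Icc 0 L, dist z (g r) ≤ dist z (g u))
    (hσ : GeodesicFrom σ (g r) z) :
    QuasiGeodesicOn 3 0 (concatNP g σ r) 0 (r + dist (g r) z)
      ∧ concatNP g σ r 0 = g 0
      ∧ concatNP g σ r (r + dist (g r) z) = z := by
  obtain ⟨hσg, hσ0, hσD⟩ := hσ
  set D := dist (g r) z with hDdef
  have hD : 0 ≤ D := dist_nonneg
  set T := r + D with hTdef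
  set P := concatNP g σ r with hPdef
  have hbσ : ∀ q ∈ Set.Icc 0 D, dist z (σ q) = D - q := by
    intro q hq
    rw [← hσD, dist_comm, hσg q hq D ⟨hD, le_rfl⟩, abs_sub_comm,
      abs_of_nonneg (by linarith [hq.2])]
  have aux : ∀ u v, u ∈ Set.Icc 0 T → v ∈ Set.Icc 0 T → u ≤ v →
      (1/(3:ℝ)) * |u - v| - 0 ≤ dist (P u) (P v) ∧ dist (P u) (P v) ≤ 3 * |u - v| + 0 := by
    intro u v hu hv huv
    have habs : |u - v| = v - u := by
      rw [abs_sub_comm]; exact abs_of_nonneg (by linarith)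
    by_cases hvr : v ≤ r
    · have hur : u ≤ r := le_trans huv hvr
      have hmu : u ∈ Set.Icc 0 L := ⟨hu.1, le_trans hur hr.2⟩
      have hmv : v ∈ Set.Icc 0 L := ⟨hv.1, le_trans hvr hr.2⟩
      rw [hPdef, concatNP_left g σ hur, concatNP_left g σ hvr, hg u hmu v hmv]
      constructor <;> [skip; skip] <;> nlinarith [abs_nonneg (u - v)]
    · by_cases hur : u ≤ r
      · -- cross case
        have hmu : u ∈ Set.Icc 0 L := ⟨hu.1, le_trans hur hr.2⟩
        push_neg at hvr
        have hq : v - r ∈ Set.Icc 0 D := ⟨by linarith, by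
          have := hv.2; rw [hTdef] at this; linarith⟩
        rw [hPdef, concatNP_left g σ hur, concatNP_right g σ (not_le.2 hvr)]
        have h1 : dist z (g u) ≤ dist z (σ (v - r)) + dist (σ (v - r)) (g u) :=
          dist_triangle _ _ _
        have h2 : dist z (g r) ≤ dist z (g u) := hmin u hmu
        have h3 : dist z (g r) = D := dist_comm z (g r) ▸ rfl
        have h4 : dist z (σ (v - r)) = D - (v - r) := hbσ _ hq
        have h5 : dist (g u) (g r) = r - u := by
          rw [hg u hmu r hr, abs_sub_comm, abs_of_nonneg (by linarith)]
        have h6 : dist (g r) (σ (v - r)) = v - r := by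
          rw [← hσ0, hσg 0 ⟨le_rfl, hD⟩ (v - r) hq, abs_sub_comm, sub_zero,
            abs_of_nonneg (by linarith [hq.1])]
        have h7 : dist (g u) (g r) ≤ dist (g u) (σ (v - r)) + dist (σ (v - r)) (g r) :=
          dist_triangle _ _ _
        have h8 : dist (g u) (σ (v - r)) ≤ dist (g u) (g r) + dist (g r) (σ (v - r)) :=
          dist_triangle _ _ _
        have hds : dist (σ (v - r)) (g u) = dist (g u) (σ (v - r)) := dist_comm _ _
        have hds2 : dist (σ (v - r)) (g r) = dist (g r) (σ (v - r)) := dist_comm _ _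
        constructor
        · rw [habs]
          rw [hds] at h1; rw [hds2] at h7
          -- dist ≥ v - r  and  dist ≥ (r-u) - (v-r); hence 3*dist ≥ v - u
          linarith
        · rw [habs]; linarith
      · push_neg at hur
        have hqu : u - r ∈ Set.Icc 0 D := ⟨by linarith, by
          have := hu.2; rw [hTdef] at this; linarith⟩
        have hqv : v - r ∈ Set.Icc 0 D := ⟨by linarith, by
          have := hv.2; rw [hTdef] at this; linarith⟩
        rw [hPdef, concatNP_right g σ (not_le.2 hur), concatNP_right g σ (by push_neg; linarith),
          hσg _ hqu _ hqv]
        have : (u - r) - (v - r) = u - v := by ring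
        rw [this]
        constructor <;> nlinarith [abs_nonneg (u - v)]
  refine ⟨?_, ?_, ?_⟩
  · intro a ha b hb
    rcases le_total a b with h | h
    · exact aux a b ha hb h
    · constructor
      · rw [abs_sub_comm, dist_comm]; exact (aux b a hb ha h).1
      · rw [abs_sub_comm, dist_comm]; exact (aux b a hb ha h).2
  · exact concatNP_left g σ hr.1
  · by_cases hTr : T ≤ r
    · have hD0 : D = 0 := le_antisymm (by rw [hTdef] at hTr; linarith) hD
      have hgz : g r = z := by rw [← dist_eq_zero, ← hDdef]; exact hD0
      have hTr' : T = r := by rw [hTdef, hD0, add_zero]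
      rw [hPdef, concatNP_left g σ hTr, hTr', hgz]
    · push_neg at hTr
      rw [hPdef, concatNP_right g σ (not_le.2 hTr)]
      have : T - r = D := by rw [hTdef]; ring
      rw [this]; exact hσD

/-- Reverse covering: a geodesic lies near any path with the same endpoints that
lies near its image. -/
lemma rev_cover {X : Type*} [MetricSpace X] (g : ℝ → X) (L : ℝ) (hL : 0 ≤ L)
    (hg : IsGeodesicOn g (Set.Icc 0 L)) (P : ℝ → X) (Tt : ℝ) (hT : 0 ≤ Tt)
    (hP0 : P 0 = g 0) (hPT : P Tt = g L)
    (hup : ∀ u ∈ Set.Icc 0 Tt, ∀ v ∈ Set.Icc 0 Tt, dist (P u) (P v) ≤ 3 * |u - v|)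
    (M : ℝ)
    (hnear : ∀ u ∈ Set.Icc 0 Tt, ∃ s' ∈ Set.Icc 0 L, dist (P u) (g s') ≤ M) :
    ∀ s ∈ Set.Icc 0 L, ∃ u ∈ Set.Icc 0 Tt, dist (g s) (P u) ≤ 2 * M := by
  intro s hs
  set h : ℝ → ℝ := fun u => dist (P u) (g 0) with hhdef
  have hcont : ContinuousOn h (Set.Icc 0 Tt) := by
    apply LipschitzOnWith.continuousOn (K := 3)
    rw [lipschitzOnWith_iff_dist_le_mul]
    intro u hu v hv
    have h1 : dist (h u) (h v) ≤ dist (P u) (P v) := by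
      rw [Real.dist_eq]; exact abs_dist_sub_le _ _ _
    have h2 := hup u hu v hv
    rw [Real.dist_eq]
    calc dist (h u) (h v) ≤ 3 * |u - v| := le_trans h1 h2
      _ ≤ (3:NNReal) * |u - v| := by norm_num
  have h0 : h 0 = 0 := by rw [hhdef]; simp [hP0]
  have hTv : h Tt = L := by
    rw [hhdef]; simp only [hPT]
    rw [hg L ⟨hL, le_rfl⟩ 0 ⟨le_rfl, hL⟩, sub_zero, abs_of_nonneg hL]
  have hmem : s ∈ Set.Icc (h 0) (h Tt) := by rw [h0, hTv]; exact hs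
  obtain ⟨u, hu, hus⟩ := intermediate_value_Icc hT hcont hmem
  obtain ⟨s', hs', hd⟩ := hnear u hu
  have hgs' : dist (g s') (g 0) = s' := by
    rw [hg s' hs' 0 ⟨le_rfl, hL⟩, sub_zero, abs_of_nonneg hs'.1]
  have hus' : dist (P u) (g 0) = s := hus
  have hss' : |s' - s| ≤ M := by
    have h1 : |dist (g s') (g 0) - dist (P u) (g 0)| ≤ dist (g s') (P u) :=
      abs_dist_sub_le _ _ _
    rw [hgs', hus'] at h1
    exact h1.trans (by rw [dist_comm]; exact hd)
  refine ⟨u, hu, ?_⟩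
  calc dist (g s) (P u) ≤ dist (g s) (g s') + dist (g s') (P u) := dist_triangle _ _ _
    _ ≤ |s - s'| + M := by
        rw [hg s hs s' hs']
        gcongr
        rw [dist_comm]; exact hd
    _ ≤ M + M := by
        have : |s - s'| ≤ M := by rw [abs_sub_comm]; exact hss'
        linarith
    _ = 2 * M := by ring

lemma GeoTriangle.side_zero {X : Type*} [MetricSpace X] (T : GeoTriangle X) :
    T.side 0 = T.s1 '' Set.Icc 0 (dist T.a T.b) := rfl
lemma GeoTriangle.side_one {X : Type*} [MetricSpace X] (T : GeoTriangle X) :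
    T.side 1 = T.s2 '' Set.Icc 0 (dist T.b T.c) := rfl
lemma GeoTriangle.side_two {X : Type*} [MetricSpace X] (T : GeoTriangle X) :
    T.side 2 = T.s3 '' Set.Icc 0 (dist T.c T.a) := rfl

/-- If two sides of a geodesic triangle are `N`-Morse, then the triangle is
δ-thin for some δ depending only on the Morse gauge `N`. -/
theorem two_morse_sides_imply_thin (N : ℝ → ℝ → ℝ) :
    ∃ δ : ℝ, 0 ≤ δ ∧
      ∀ (X : Type) [MetricSpace X], GeodesicSpace X →
        ∀ T : GeoTriangle X,
          MorseOn N T.s1 (Set.Icc 0 (dist T.a T.b)) →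
          MorseOn N T.s2 (Set.Icc 0 (dist T.b T.c)) →
          IsThin δ T := by
  refine ⟨3 * max (N 3 0) 0, by positivity, ?_⟩
  intro X _ hX T hM1 hM2
  have hMδ : 2 * N 3 0 ≤ 3 * max (N 3 0) 0 ∧ 3 * N 3 0 ≤ 3 * max (N 3 0) 0 ∧
      N 3 0 ≤ 3 * max (N 3 0) 0 := by
    have h1 := le_max_left (N 3 0) 0
    have h2 := le_max_right (N 3 0) 0
    refine ⟨by linarith, by linarith, by linarith⟩
  obtain ⟨hg3, hs30, hs3L⟩ := T.h3
  set L3 := dist T.c T.a with hL3def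
  set Dab := dist T.a T.b with hDabdef
  set Dbc := dist T.b T.c with hDbcdef
  have hL3nn : 0 ≤ L3 := dist_nonneg
  have hDabnn : 0 ≤ Dab := dist_nonneg
  have hDbcnn : 0 ≤ Dbc := dist_nonneg
  -- nearest point on side 3 to b
  have hcont : ContinuousOn (fun u => dist T.b (T.s3 u)) (Set.Icc 0 L3) := by
    apply LipschitzOnWith.continuousOn (K := 1)
    rw [lipschitzOnWith_iff_dist_le_mul]
    intro u hu v hv
    have h1 : |dist (T.s3 u) T.b - dist (T.s3 v) T.b| ≤ dist (T.s3 u) (T.s3 v) :=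
      abs_dist_sub_le _ _ _
    rw [hg3 u hu v hv] at h1
    rw [Real.dist_eq, dist_comm T.b (T.s3 u), dist_comm T.b (T.s3 v), Real.dist_eq]
    simpa using h1
  obtain ⟨r, hrIcc, hrmin'⟩ :=
    IsCompact.exists_isMinOn isCompact_Icc (⟨0, le_rfl, hL3nn⟩ : (Set.Icc (0:ℝ) L3).Nonempty)
      hcont
  have hrmin : ∀ u ∈ Set.Icc 0 L3, dist T.b (T.s3 r) ≤ dist T.b (T.s3 u) :=
    fun u hu => hrmin' hu
  obtain ⟨σ, hσ⟩ := hX (T.s3 r) T.b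
  set D := dist (T.s3 r) T.b with hDdef
  have hDnn : 0 ≤ D := dist_nonneg
  obtain ⟨hQG2, hP20, hP2T⟩ := concat_key T.s3 σ L3 hg3 T.b r hrIcc hrmin hσ
  -- reversed side 3
  set g1 : ℝ → X := fun u => T.s3 (L3 - u) with hg1def
  have hg1 : IsGeodesicOn g1 (Set.Icc 0 L3) := by
    intro u hu v hv
    simp only [hg1def]
    rw [hg3 (L3 - u) ⟨by linarith [hu.2], by linarith [hu.1]⟩ (L3 - v)
      ⟨by linarith [hv.2], by linarith [hv.1]⟩,
      show L3 - u - (L3 - v) = -(u - v) by ring, abs_neg]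
  have hr1Icc : L3 - r ∈ Set.Icc 0 L3 := ⟨by linarith [hrIcc.2], by linarith [hrIcc.1]⟩
  have hg1r : g1 (L3 - r) = T.s3 r := by simp only [hg1def]; rw [sub_sub_cancel]
  have hmin1 : ∀ u ∈ Set.Icc 0 L3, dist T.b (g1 (L3 - r)) ≤ dist T.b (g1 u) := by
    intro u hu
    rw [hg1r]
    exact hrmin (L3 - u) ⟨by linarith [hu.2], by linarith [hu.1]⟩
  have hσ1 : GeodesicFrom σ (g1 (L3 - r)) T.b := by rw [hg1r]; exact hσ
  obtain ⟨hQG1, hP10, hP1T⟩ := concat_key g1 σ L3 hg1 T.b (L3 - r) hr1Icc hmin1 hσ1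
  have hDeq : dist (g1 (L3 - r)) T.b = D := by rw [hg1r]
  rw [hDeq] at hQG1 hP1T
  -- Morse applied to the two concatenations
  have hmem_c : concatNP T.s3 σ r 0 ∈ T.s2 '' Set.Icc 0 Dbc := by
    rw [hP20, hs30]
    exact ⟨Dbc, ⟨hDbcnn, le_rfl⟩, T.h2.2.2⟩
  have hmem_b2 : concatNP T.s3 σ r (r + D) ∈ T.s2 '' Set.Icc 0 Dbc := by
    rw [hP2T]
    exact ⟨0, ⟨le_rfl, hDbcnn⟩, T.h2.2.1⟩
  have HN2 := hM2 3 0 (by norm_num) le_rfl (concatNP T.s3 σ r) 0 (r + D)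
    (by linarith [hrIcc.1]) hQG2 hmem_c hmem_b2
  have hmem_a : concatNP g1 σ (L3 - r) 0 ∈ T.s1 '' Set.Icc 0 Dab := by
    rw [hP10]
    have : g1 0 = T.a := by simp only [hg1def]; rw [sub_zero, hs3L]
    rw [this]
    exact ⟨0, ⟨le_rfl, hDabnn⟩, T.h1.2.1⟩
  have hmem_b1 : concatNP g1 σ (L3 - r) (L3 - r + D) ∈ T.s1 '' Set.Icc 0 Dab := by
    rw [hP1T]
    exact ⟨Dab, ⟨hDabnn, le_rfl⟩, T.h1.2.2⟩
  have HN1 := hM1 3 0 (by norm_num) le_rfl (concatNP g1 σ (L3 - r)) 0 (L3 - r + D)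
    (by linarith [hr1Icc.1]) hQG1 hmem_a hmem_b1
  -- reverse covering of side 1 (s1)
  have hup1 : ∀ u ∈ Set.Icc 0 (L3 - r + D), ∀ v ∈ Set.Icc 0 (L3 - r + D),
      dist (concatNP g1 σ (L3 - r) u) (concatNP g1 σ (L3 - r) v) ≤ 3 * |u - v| := by
    intro u hu v hv
    have := (hQG1 u hu v hv).2
    linarith
  have hnear1 : ∀ u ∈ Set.Icc 0 (L3 - r + D),
      ∃ s' ∈ Set.Icc 0 Dab, dist (concatNP g1 σ (L3 - r) u) (T.s1 s') ≤ N 3 0 := by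
    intro u hu
    obtain ⟨q, ⟨s', hs', rfl⟩, hd⟩ := HN1 u hu
    exact ⟨s', hs', hd⟩
  have hcov1 := rev_cover T.s1 Dab hDabnn T.h1.1 (concatNP g1 σ (L3 - r)) (L3 - r + D)
    (by linarith [hr1Icc.1]) (by rw [hP10, T.h1.2.1]; simp only [hg1def]; rw [sub_zero, hs3L])
    (by rw [hP1T, T.h1.2.2]) hup1 (N 3 0) hnear1
  -- reverse covering of side 2 (s2), via the reversed parametrization g2
  set g2 : ℝ → X := fun u => T.s2 (Dbc - u) with hg2def
  have hg2 : IsGeodesicOn g2 (Set.Icc 0 Dbc) := by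
    intro u hu v hv
    simp only [hg2def]
    rw [T.h2.1 (Dbc - u) ⟨by linarith [hu.2], by linarith [hu.1]⟩ (Dbc - v)
      ⟨by linarith [hv.2], by linarith [hv.1]⟩,
      show Dbc - u - (Dbc - v) = -(u - v) by ring, abs_neg]
  have hup2 : ∀ u ∈ Set.Icc 0 (r + D), ∀ v ∈ Set.Icc 0 (r + D),
      dist (concatNP T.s3 σ r u) (concatNP T.s3 σ r v) ≤ 3 * |u - v| := by
    intro u hu v hv
    have := (hQG2 u hu v hv).2
    linarith
  have hnear2 : ∀ u ∈ Set.Icc 0 (r + D),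
      ∃ s' ∈ Set.Icc 0 Dbc, dist (concatNP T.s3 σ r u) (g2 s') ≤ N 3 0 := by
    intro u hu
    obtain ⟨q, ⟨s', hs', rfl⟩, hd⟩ := HN2 u hu
    refine ⟨Dbc - s', ⟨by linarith [hs'.2], by linarith [hs'.1]⟩, ?_⟩
    have : g2 (Dbc - s') = T.s2 s' := by simp only [hg2def]; rw [sub_sub_cancel]
    rw [this]
    exact hd
  have hcov2 := rev_cover g2 Dbc hDbcnn hg2 (concatNP T.s3 σ r) (r + D)
    (by linarith [hrIcc.1])
    (by rw [hP20, hs30]; simp only [hg2def]; rw [sub_zero, T.h2.2.2])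
    (by rw [hP2T]; simp only [hg2def]; rw [sub_self, T.h2.2.1]) hup2 (N 3 0) hnear2
  -- now prove thinness
  intro i p hp
  fin_cases i
  · -- side 0 : p on s1
    have hp' : p ∈ T.s1 '' Set.Icc 0 Dab := hp
    show ∃ q ∈ T.s2 '' Set.Icc 0 Dbc ∪ T.s3 '' Set.Icc 0 L3, dist p q ≤ 3 * max (N 3 0) 0
    obtain ⟨s, hs, rfl⟩ := hp'
    obtain ⟨u, hu, hd⟩ := hcov1 s hs
    by_cases hur : u ≤ L3 - r
    · refine ⟨concatNP g1 σ (L3 - r) u, Or.inr ?_, hd.trans hMδ.1⟩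
      refine ⟨L3 - u, ⟨by linarith [hu.2, hDnn, hrIcc.1], by linarith [hu.1]⟩, ?_⟩
      rw [concatNP_left g1 σ hur]
    · push_neg at hur
      have hvmem : r + (u - (L3 - r)) ∈ Set.Icc 0 (r + D) :=
        ⟨by linarith [hrIcc.1], by linarith [hu.2]⟩
      obtain ⟨q, hqmem, hqd⟩ := HN2 _ hvmem
      have hPv : concatNP T.s3 σ r (r + (u - (L3 - r))) = σ (u - (L3 - r)) := by
        rw [concatNP_right T.s3 σ (by push_neg; linarith)]
        congr 1
        ring
      rw [hPv] at hqd
      rw [concatNP_right g1 σ (not_le.2 hur)] at hd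
      refine ⟨q, Or.inl hqmem, ?_⟩
      calc dist (T.s1 s) q ≤ dist (T.s1 s) (σ (u - (L3 - r))) + dist (σ (u - (L3 - r))) q :=
            dist_triangle _ _ _
        _ ≤ 2 * N 3 0 + N 3 0 := add_le_add hd hqd
        _ ≤ 3 * max (N 3 0) 0 := by linarith [hMδ.2.1]
  · -- side 1 : p on s2
    have hp' : p ∈ T.s2 '' Set.Icc 0 Dbc := hp
    show ∃ q ∈ T.s3 '' Set.Icc 0 L3 ∪ T.s1 '' Set.Icc 0 Dab, dist p q ≤ 3 * max (N 3 0) 0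
    obtain ⟨s, hs, rfl⟩ := hp'
    have hg2s : g2 (Dbc - s) = T.s2 s := by simp only [hg2def]; rw [sub_sub_cancel]
    obtain ⟨u, hu, hd⟩ := hcov2 (Dbc - s) ⟨by linarith [hs.2], by linarith [hs.1]⟩
    rw [hg2s] at hd
    by_cases hur : u ≤ r
    · refine ⟨concatNP T.s3 σ r u, Or.inl ?_, hd.trans hMδ.1⟩
      refine ⟨u, ⟨hu.1, le_trans hur hrIcc.2⟩, ?_⟩
      rw [concatNP_left T.s3 σ hur]
    · push_neg at hur
      have hvmem : (L3 - r) + (u - r) ∈ Set.Icc 0 (L3 - r + D) :=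
        ⟨by linarith [hr1Icc.1], by linarith [hu.2]⟩
      obtain ⟨q, hqmem, hqd⟩ := HN1 _ hvmem
      have hPv : concatNP g1 σ (L3 - r) ((L3 - r) + (u - r)) = σ (u - r) := by
        rw [concatNP_right g1 σ (by push_neg; linarith)]
        congr 1
        ring
      rw [hPv] at hqd
      rw [concatNP_right T.s3 σ (not_le.2 hur)] at hd
      refine ⟨q, Or.inr hqmem, ?_⟩
      calc dist (T.s2 s) q ≤ dist (T.s2 s) (σ (u - r)) + dist (σ (u - r)) q :=
            dist_triangle _ _ _
        _ ≤ 2 * N 3 0 + N 3 0 := add_le_add hd hqd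
        _ ≤ 3 * max (N 3 0) 0 := by linarith [hMδ.2.1]
  · -- side 2 : p on s3
    have hp' : p ∈ T.s3 '' Set.Icc 0 L3 := hp
    show ∃ q ∈ T.s1 '' Set.Icc 0 Dab ∪ T.s2 '' Set.Icc 0 Dbc, dist p q ≤ 3 * max (N 3 0) 0
    obtain ⟨s, hs, rfl⟩ := hp'
    by_cases hsr : s ≤ r
    · obtain ⟨q, hqmem, hqd⟩ := HN2 s ⟨hs.1, by linarith [hrIcc.2, hs.2, hDnn]⟩
      rw [concatNP_left T.s3 σ hsr] at hqd
      exact ⟨q, Or.inr hqmem, hqd.trans hMδ.2.2⟩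
    · push_neg at hsr
      have humem : L3 - s ∈ Set.Icc 0 (L3 - r + D) :=
        ⟨by linarith [hs.2], by linarith [hs.1, hDnn, hsr]⟩
      obtain ⟨q, hqmem, hqd⟩ := HN1 (L3 - s) humem
      have hcc : concatNP g1 σ (L3 - r) (L3 - s) = T.s3 s := by
        rw [concatNP_left g1 σ (by linarith)]
        simp only [hg1def]
        rw [sub_sub_cancel]
      rw [hcc] at hqd
      exact ⟨q, Or.inl hqmem, hqd.trans hMδ.2.2⟩
end
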